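/- There exists a constant c > 0 such that the following holds. Let d > 0, ψ ≥ 1, and let C be a dyadic cell with side(C) ≥ d/4. Then the number of dyadic cells Z for which there exists an axis-aligned square γ with side length in [d, ψ·d], storing cell Z, side(γ) ≥ side(C), and such that 5C intersects the boundary of γ, is at most c·(log₂ψ + 1). -/
import Mathlib


open Set

/-- A dyadic cell at level `level` (side length `2^level`) with lower-left corner
`(a·2^level, b·2^level)`. -/
structure DyadicCell where
  level : ℤ
  a : ℤ
  b : ℤ
deriving DecidableEq

/-- The side length of a dyadic cell. -/
noncomputable def DyadicCell.side (C : DyadicCell) : ℝ := 2 ^ C.level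

/-- The dyadic cell as a subset of the plane. -/
noncomputable def DyadicCell.toSet (C : DyadicCell) : Set (ℝ × ℝ) :=
  Set.Icc ((C.a : ℝ) * 2 ^ C.level) ((C.a + 1 : ℝ) * 2 ^ C.level) ×ˢ
    Set.Icc ((C.b : ℝ) * 2 ^ C.level) ((C.b + 1 : ℝ) * 2 ^ C.level)

/-- `5C`: the square obtained by scaling the cell `C` by a factor `5` about its center. -/
noncomputable def DyadicCell.scale5 (C : DyadicCell) : Set (ℝ × ℝ) :=
  Set.Icc ((C.a - 2 : ℝ) * 2 ^ C.level) ((C.a + 3 : ℝ) * 2 ^ C.level) ×ˢ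
    Set.Icc ((C.b - 2 : ℝ) * 2 ^ C.level) ((C.b + 3 : ℝ) * 2 ^ C.level)

/-- An axis-aligned square `[x, x+s] × [y, y+s]` of side length `s > 0`. -/
structure Square where
  x : ℝ
  y : ℝ
  s : ℝ
  s_pos : 0 < s

/-- The square as a subset of the plane. -/
noncomputable def Square.toSet (σ : Square) : Set (ℝ × ℝ) :=
  Set.Icc σ.x (σ.x + σ.s) ×ˢ Set.Icc σ.y (σ.y + σ.s)

/-- The center of a square. -/
noncomputable def Square.center (σ : Square) : ℝ × ℝ := (σ.x + σ.s / 2, σ.y + σ.s / 2)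

/-- `C` is a storing cell of `σ`: a dyadic cell of maximal side length among those that
contain the center of `σ` and are contained in `σ`. -/
def IsStoringCell (σ : Square) (C : DyadicCell) : Prop :=
  σ.center ∈ C.toSet ∧ C.toSet ⊆ σ.toSet ∧
    ∀ D : DyadicCell, σ.center ∈ D.toSet → D.toSet ⊆ σ.toSet → D.side ≤ C.side

lemma two_zpow_pos (m : ℤ) : (0:ℝ) < 2 ^ m := zpow_pos two_pos m

lemma exists_level (t : ℝ) (ht : 0 < t) : ∃ m : ℤ, (2:ℝ)^m ≤ t ∧ t < 2^(m+1) := by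
  refine ⟨⌊Real.logb 2 t⌋, ?_, ?_⟩
  · have h := (Real.le_logb_iff_rpow_le (by norm_num) ht (x := (⌊Real.logb 2 t⌋ : ℝ))).mp
      (Int.floor_le _)
    rwa [Real.rpow_intCast] at h
  · have h := (Real.logb_lt_iff_lt_rpow (b := 2) (by norm_num) ht
      (y := ((⌊Real.logb 2 t⌋ + 1 : ℤ) : ℝ))).mp (by push_cast; exact Int.lt_floor_add_one _)
    rwa [Real.rpow_intCast] at h

lemma floor_cell (u : ℝ) (m : ℤ) :
    (⌊u / 2^m⌋ : ℝ) * 2^m ≤ u ∧ u ≤ ((⌊u / 2^m⌋ : ℝ) + 1) * 2^m ∧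
    u - 2^m ≤ (⌊u / 2^m⌋ : ℝ) * 2^m ∧ ((⌊u / 2^m⌋ : ℝ) + 1) * 2^m ≤ u + 2^m := by
  have h2m : (0:ℝ) < 2^m := two_zpow_pos m
  have h1 : ((⌊u / 2^m⌋ : ℝ)) * 2^m ≤ u := by
    rw [← le_div_iff₀ h2m]; exact Int.floor_le _
  have h2 : u < ((⌊u / 2^m⌋ : ℝ) + 1) * 2^m := by
    rw [← div_lt_iff₀ h2m]; exact Int.lt_floor_add_one _
  refine ⟨h1, h2.le, by nlinarith, by nlinarith⟩

/-- The storing cell has side at most the side of the square. -/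
lemma storing_up (σ : Square) (Z : DyadicCell) (h : IsStoringCell σ Z) :
    (2:ℝ) ^ Z.level ≤ σ.s := by
  have h2ℓ := two_zpow_pos Z.level
  have hmem : ((Z.a:ℝ) * 2^Z.level, (Z.b:ℝ) * 2^Z.level) ∈ Z.toSet := by
    simp only [DyadicCell.toSet, Set.mem_prod, Set.mem_Icc]
    refine ⟨⟨le_refl _, ?_⟩, ⟨le_refl _, ?_⟩⟩ <;> nlinarith
  have hmem2 : (((Z.a:ℝ)+1) * 2^Z.level, ((Z.b:ℝ)+1) * 2^Z.level) ∈ Z.toSet := by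
    simp only [DyadicCell.toSet, Set.mem_prod, Set.mem_Icc]
    refine ⟨⟨?_, le_refl _⟩, ⟨?_, le_refl _⟩⟩ <;> nlinarith
  have g1 := h.2.1 hmem
  have g2 := h.2.1 hmem2
  simp only [Square.toSet, Set.mem_prod, Set.mem_Icc] at g1 g2
  nlinarith [g1.1.1, g2.1.2]

/-- The storing cell has side more than an eighth of the side of the square. -/
lemma storing_low (σ : Square) (Z : DyadicCell) (h : IsStoringCell σ Z) :
    σ.s < 8 * 2 ^ Z.level := by
  have hs := σ.s_pos
  obtain ⟨m, hm1, hm2⟩ := exists_level (σ.s/4) (by positivity)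
  have h2m := two_zpow_pos m
  set cx := σ.x + σ.s/2 with hcx
  set cy := σ.y + σ.s/2 with hcy
  obtain ⟨ha1, ha2, ha3, ha4⟩ := floor_cell cx m
  obtain ⟨hb1, hb2, hb3, hb4⟩ := floor_cell cy m
  have hD : DyadicCell.side ⟨m, ⌊cx / 2^m⌋, ⌊cy / 2^m⌋⟩ ≤ Z.side := by
    apply h.2.2
    · simp only [DyadicCell.toSet, Square.center, Set.mem_prod, Set.mem_Icc]
      exact ⟨⟨ha1, ha2⟩, ⟨hb1, hb2⟩⟩
    · simp only [DyadicCell.toSet, Square.toSet]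
      apply Set.prod_mono <;> apply Set.Icc_subset_Icc <;> linarith
  simp only [DyadicCell.side] at hD
  have h2m1 : (2:ℝ)^(m+1) = 2 * 2^m := by
    rw [zpow_add₀ (two_ne_zero) m 1]; ring
  rw [h2m1] at hm2
  linarith

theorem statement9 : ∃ c : ℝ, 0 < c ∧
    ∀ (d ψ : ℝ), 0 < d → 1 ≤ ψ →
    ∀ C : DyadicCell, d / 4 ≤ C.side →
      letI A : Set DyadicCell := {Z | ∃ γ : Square, d ≤ γ.s ∧ γ.s ≤ ψ * d ∧
        IsStoringCell γ Z ∧ C.side ≤ γ.s ∧ (C.scale5 ∩ frontier γ.toSet).Nonempty}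
      A.Finite ∧ (A.ncard : ℝ) ≤ c * (Real.logb 2 ψ + 1) := by
  refine ⟨8664, by norm_num, ?_⟩
  intro d ψ hd hψ C hC
  set A : Set DyadicCell := {Z | ∃ γ : Square, d ≤ γ.s ∧ γ.s ≤ ψ * d ∧
        IsStoringCell γ Z ∧ C.side ≤ γ.s ∧ (C.scale5 ∩ frontier γ.toSet).Nonempty} with hA
  have hψ0 : (0:ℝ) < ψ := lt_of_lt_of_le one_pos hψ
  have hlogb0 : 0 ≤ Real.logb 2 ψ := Real.logb_nonneg one_lt_two hψ
  set n : ℤ := ⌈Real.logb 2 ψ⌉ + 2 with hn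
  have hn0 : 0 ≤ n := by
    have := Int.ceil_nonneg hlogb0; omega
  set f : DyadicCell → ℤ × ℤ × ℤ := fun Z =>
    (Z.level, Z.a - ⌊(C.a:ℝ) * 2^C.level / 2^Z.level⌋,
      Z.b - ⌊(C.b:ℝ) * 2^C.level / 2^Z.level⌋) with hf
  have hfinj : Function.Injective f := by
    rintro ⟨l1, a1, b1⟩ ⟨l2, a2, b2⟩ h
    simp only [hf, Prod.mk.injEq] at h
    obtain ⟨h1, h2, h3⟩ := h
    subst h1
    simp only [DyadicCell.mk.injEq]
    exact ⟨trivial, by linarith, by linarith⟩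
  set T : Finset (ℤ × ℤ × ℤ) :=
    Finset.Icc (C.level - 2) (C.level + n) ×ˢ (Finset.Icc (-17) 20 ×ˢ Finset.Icc (-17) 20)
    with hT
  have h2L := two_zpow_pos C.level
  have hCside : C.side = 2 ^ C.level := rfl
  rw [hCside] at hC
  have hmaps : ∀ Z ∈ A, f Z ∈ T := by
    rintro Z ⟨γ, hd1, hd2, hst, hCs, p, hp5, hpf⟩
    have hγs := γ.s_pos
    have h2ℓ := two_zpow_pos Z.level
    have hpγ : p ∈ γ.toSet := by
      have hcl : IsClosed γ.toSet := by
        unfold Square.toSet; exact (isClosed_Icc.prod isClosed_Icc)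
      exact hcl.frontier_subset hpf
    simp only [Square.toSet, Set.mem_prod, Set.mem_Icc] at hpγ
    simp only [DyadicCell.scale5, Set.mem_prod, Set.mem_Icc] at hp5
    have hlow : γ.s < 8 * 2 ^ Z.level := storing_low γ Z hst
    have hup : (2:ℝ) ^ Z.level ≤ γ.s := storing_up γ Z hst
    have hcent := hst.1
    simp only [DyadicCell.toSet, Square.center, Set.mem_prod, Set.mem_Icc] at hcent
    obtain ⟨⟨hc1, hc2⟩, hc3, hc4⟩ := hcent
    rw [hCside] at hCs
    -- level bounds
    have hlev1 : C.level - 2 ≤ Z.level := by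
      by_contra hcon
      push_neg at hcon
      have h8 : (2:ℝ)^(Z.level + 3) ≤ 2 ^ C.level :=
        zpow_le_zpow_right₀ one_le_two (by omega)
      rw [zpow_add₀ (two_ne_zero) Z.level 3] at h8
      norm_num at h8
      linarith
    have h2L4 : (2:ℝ) ^ C.level ≤ 4 * 2 ^ Z.level := by
      have h8 : (2:ℝ)^C.level ≤ 2 ^ (Z.level + 2) :=
        zpow_le_zpow_right₀ one_le_two (by omega)
      rw [zpow_add₀ (two_ne_zero) Z.level 2] at h8
      norm_num at h8
      linarith
    have hlev2 : Z.level ≤ C.level + n := by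
      have h1 : (2:ℝ) ^ Z.level ≤ 4 * ψ * 2 ^ C.level := by nlinarith
      have h2 : (2:ℝ) ^ (Z.level - C.level) ≤ 4 * ψ := by
        rw [zpow_sub₀ (two_ne_zero), div_le_iff₀ h2L]
        linarith
      have h3 : ((Z.level - C.level : ℤ) : ℝ) ≤ Real.logb 2 (4 * ψ) := by
        rw [Real.le_logb_iff_rpow_le one_lt_two (by positivity), Real.rpow_intCast]
        exact h2
      have h4 : Real.logb 2 (4 * ψ) = 2 + Real.logb 2 ψ := by
        rw [Real.logb_mul (by norm_num) (ne_of_gt hψ0)]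
        congr 1
        rw [show (4:ℝ) = 2 ^ (2:ℕ) by norm_num, Real.logb_pow,
          Real.logb_self_eq_one one_lt_two]
        norm_num
      have h5 : ((Z.level - C.level : ℤ) : ℝ) ≤ ((2 + ⌈Real.logb 2 ψ⌉ : ℤ) : ℝ) := by
        rw [h4] at h3
        have := Int.le_ceil (Real.logb 2 ψ)
        push_cast
        push_cast at h3
        linarith
      have h6 : Z.level - C.level ≤ 2 + ⌈Real.logb 2 ψ⌉ := by exact_mod_cast h5
      omega
    -- position bounds (x)
    have hxa1 : (Z.a:ℝ) * 2 ^ Z.level ≤ (C.a:ℝ) * 2 ^ C.level + 20 * 2 ^ Z.level := by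
      linarith [hp5.1.2, hpγ.1.1, hc1]
    have hxa2 : (C.a:ℝ) * 2 ^ C.level - 17 * 2 ^ Z.level ≤ (Z.a:ℝ) * 2 ^ Z.level := by
      linarith [hp5.1.1, hpγ.1.2, hc2]
    have hyb1 : (Z.b:ℝ) * 2 ^ Z.level ≤ (C.b:ℝ) * 2 ^ C.level + 20 * 2 ^ Z.level := by
      linarith [hp5.2.2, hpγ.2.1, hc3]
    have hyb2 : (C.b:ℝ) * 2 ^ C.level - 17 * 2 ^ Z.level ≤ (Z.b:ℝ) * 2 ^ Z.level := by
      linarith [hp5.2.1, hpγ.2.2, hc4]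
    -- floor bounds
    have hfa2 : Z.a - ⌊(C.a:ℝ) * 2^C.level / 2^Z.level⌋ ≤ 20 := by
      have hle : Z.a - 20 ≤ ⌊(C.a:ℝ) * 2^C.level / 2^Z.level⌋ := by
        rw [Int.le_floor, le_div_iff₀ h2ℓ]
        push_cast
        linarith
      omega
    have hfa1 : -17 ≤ Z.a - ⌊(C.a:ℝ) * 2^C.level / 2^Z.level⌋ := by
      have h1 : ((⌊(C.a:ℝ) * 2^C.level / 2^Z.level⌋ : ℤ) : ℝ) ≤ ((Z.a + 17 : ℤ) : ℝ) := by
        have h2 : (C.a:ℝ) * 2^C.level / 2^Z.level ≤ ((Z.a + 17 : ℤ) : ℝ) := by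
          rw [div_le_iff₀ h2ℓ]
          push_cast
          linarith
        exact le_trans (Int.floor_le _) h2
      have h3 : ⌊(C.a:ℝ) * 2^C.level / 2^Z.level⌋ ≤ Z.a + 17 := by exact_mod_cast h1
      omega
    have hfb2 : Z.b - ⌊(C.b:ℝ) * 2^C.level / 2^Z.level⌋ ≤ 20 := by
      have hle : Z.b - 20 ≤ ⌊(C.b:ℝ) * 2^C.level / 2^Z.level⌋ := by
        rw [Int.le_floor, le_div_iff₀ h2ℓ]
        push_cast
        linarith
      omega
    have hfb1 : -17 ≤ Z.b - ⌊(C.b:ℝ) * 2^C.level / 2^Z.level⌋ := by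
      have h1 : ((⌊(C.b:ℝ) * 2^C.level / 2^Z.level⌋ : ℤ) : ℝ) ≤ ((Z.b + 17 : ℤ) : ℝ) := by
        have h2 : (C.b:ℝ) * 2^C.level / 2^Z.level ≤ ((Z.b + 17 : ℤ) : ℝ) := by
          rw [div_le_iff₀ h2ℓ]
          push_cast
          linarith
        exact le_trans (Int.floor_le _) h2
      have h3 : ⌊(C.b:ℝ) * 2^C.level / 2^Z.level⌋ ≤ Z.b + 17 := by exact_mod_cast h1
      omega
    simp only [hT, hf, Finset.mem_product, Finset.mem_Icc]
    exact ⟨⟨hlev1, hlev2⟩, ⟨hfa1, hfa2⟩, ⟨hfb1, hfb2⟩⟩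
  have hsubT : f '' A ⊆ ↑T := by
    rintro _ ⟨Z, hZ, rfl⟩
    exact hmaps Z hZ
  have hfin : A.Finite := Set.Finite.of_finite_image (T.finite_toSet.subset hsubT) hfinj.injOn
  refine ⟨hfin, ?_⟩
  have hcard : A.ncard ≤ T.card := by
    rw [← Set.ncard_coe_finset, ← Set.ncard_image_of_injective A hfinj]
    exact Set.ncard_le_ncard hsubT T.finite_toSet
  have hTcard : T.card = (n + 3).toNat * 1444 := by
    rw [hT, Finset.card_product, Finset.card_product, Int.card_Icc, Int.card_Icc]
    norm_num
    congr 1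
    omega
  have hcast : (((n + 3).toNat : ℕ) : ℝ) = (n : ℝ) + 3 := by
    have : ((n + 3).toNat : ℤ) = n + 3 := Int.toNat_of_nonneg (by omega)
    exact_mod_cast congrArg (Int.cast : ℤ → ℝ) this
  have hnlog : (n : ℝ) ≤ Real.logb 2 ψ + 3 := by
    have h1 : (⌈Real.logb 2 ψ⌉ : ℝ) < Real.logb 2 ψ + 1 := Int.ceil_lt_add_one _
    rw [hn]
    push_cast
    linarith
  calc (A.ncard : ℝ) ≤ (T.card : ℝ) := by exact_mod_cast hcard
    _ = ((n : ℝ) + 3) * 1444 := by rw [hTcard]; push_cast [hcast]; ring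
    _ ≤ (Real.logb 2 ψ + 6) * 1444 := by nlinarith
    _ ≤ 8664 * (Real.logb 2 ψ + 1) := by nlinarith
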